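/- For any f : X → ℝ^L, a bounded loss ℓ with ‖ℓ(f(x))‖_∞ ≤ 1 for all x, and teacher p^t, the expected squared deviation of the distilled empirical risk from the population risk satisfies E[(R̃(f;S) − R(f))^2] ≤ (1/N)·Var[p^t(x)^T ℓ(f(x))] + L·(E[‖p^t(x) − p*(x)‖_2])^2. -/

import Mathlib

/-!
The empirical distilled risk is the sample mean of `g x = p^t(x)ᵀ ℓ(f(x))` over `N` independent
draws, so its mean squared deviation from any constant `c` splits as its variance
`Var[g] / N` plus the squared bias `(E g - c)²`. With `c = R(f) = E[p*(x)ᵀ ℓ(f(x))]` the bias is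
`E[(p^t(x) - p*(x))ᵀ ℓ(f(x))]`, and Cauchy–Schwarz with `‖ℓ(f(x))‖₂ ≤ √L ‖ℓ(f(x))‖_∞ ≤ √L`
bounds its absolute value by `√L · E‖p^t(x) - p*(x)‖₂`.
-/

open MeasureTheory ProbabilityTheory

lemma integral_sub_const_sq_eq_variance_add {Ω : Type*} [MeasurableSpace Ω] {μ : Measure Ω}
    [IsProbabilityMeasure μ] {Y : Ω → ℝ} (hY : MemLp Y 2 μ) (c : ℝ) :
    ∫ ω, (Y ω - c) ^ 2 ∂μ = variance Y μ + (∫ ω, Y ω ∂μ - c) ^ 2 := by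
  have hYc : MemLp (fun ω => Y ω - c) 2 μ := hY.sub (memLp_const c)
  have hmean : ∫ ω, (Y ω - c) ∂μ = ∫ ω, Y ω ∂μ - c := by
    rw [integral_sub (hY.integrable one_le_two) (integrable_const c)]
    simp
  rw [← variance_sub_const hY.aestronglyMeasurable c, variance_eq_sub hYc, ← hmean]
  simp only [Pi.pow_apply]
  ring

section SampleMean

variable {𝒳 : Type*} [MeasurableSpace 𝒳] {μ : Measure 𝒳} [IsProbabilityMeasure μ]
  {N : ℕ} {g : 𝒳 → ℝ}

lemma integral_sampleMean (hN : 0 < N) (hg : Integrable g μ) :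
    ∫ S : Fin N → 𝒳, (N : ℝ)⁻¹ * ∑ n, g (S n) ∂(Measure.pi fun _ => μ) = ∫ x, g x ∂μ := by
  have hgn : ∀ n : Fin N, Integrable (fun S : Fin N → 𝒳 => g (S n)) (Measure.pi fun _ => μ) :=
    fun _ => integrable_comp_eval hg
  have hgn_int : ∀ n : Fin N,
      ∫ S : Fin N → 𝒳, g (S n) ∂(Measure.pi fun _ => μ) = ∫ x, g x ∂μ :=
    fun _ => integral_comp_eval hg.aestronglyMeasurable
  rw [integral_const_mul, integral_finsetSum _ fun n _ => hgn n]
  simp only [hgn_int, Finset.sum_const, Finset.card_univ, Fintype.card_fin, nsmul_eq_mul]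
  field_simp

lemma variance_sampleMean (hg : MemLp g 2 μ) :
    variance (fun S : Fin N → 𝒳 => (N : ℝ)⁻¹ * ∑ n, g (S n)) (Measure.pi fun _ => μ)
      = (N : ℝ)⁻¹ * variance g μ := by
  have hsum : variance (fun S : Fin N → 𝒳 => ∑ n, g (S n)) (Measure.pi fun _ => μ)
      = N * variance g μ := by
    simpa only [Finset.sum_fn, Finset.sum_const, Finset.card_univ, Fintype.card_fin,
      nsmul_eq_mul] using variance_sum_pi (μ := fun _ : Fin N => μ) (X := fun _ => g) fun _ => hg
  rw [variance_const_mul, hsum]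
  rcases N.eq_zero_or_pos with rfl | hN
  · simp
  · field_simp

lemma integral_sampleMean_sub_const_sq (hN : 0 < N) (hg : MemLp g 2 μ) (c : ℝ) :
    ∫ S : Fin N → 𝒳, ((N : ℝ)⁻¹ * ∑ n, g (S n) - c) ^ 2 ∂(Measure.pi fun _ => μ)
      = (N : ℝ)⁻¹ * variance g μ + (∫ x, g x ∂μ - c) ^ 2 := by
  have hmean : MemLp (fun S : Fin N → 𝒳 => (N : ℝ)⁻¹ * ∑ n, g (S n)) 2
      (Measure.pi fun _ => μ) :=
    (memLp_finsetSum _ fun n _ =>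
      hg.comp_measurePreserving (measurePreserving_eval _ n)).const_mul _
  rw [integral_sub_const_sq_eq_variance_add hmean, variance_sampleMean hg,
    integral_sampleMean hN (hg.integrable one_le_two)]

end SampleMean

lemma abs_sum_mul_le_sqrt_card_mul_sqrt {ι : Type*} [Fintype ι] (u v : ι → ℝ)
    (hv : ∀ i, |v i| ≤ 1) :
    |∑ i, u i * v i| ≤ √(Fintype.card ι) * √(∑ i, u i ^ 2) := by
  have hv2 : ∑ i, v i ^ 2 ≤ Fintype.card ι := by
    calc ∑ i, v i ^ 2 ≤ ∑ _i : ι, (1 : ℝ) :=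
          Finset.sum_le_sum fun i _ => by
            rw [← sq_abs]; exact pow_le_one₀ (abs_nonneg _) (hv i)
      _ = Fintype.card ι := by simp
  rw [← Real.sqrt_mul (Nat.cast_nonneg _), mul_comm]
  refine Real.abs_le_sqrt ((Finset.sum_mul_sq_le_sq_mul_sq _ _ _).trans ?_)
  exact mul_le_mul_of_nonneg_left hv2 (Finset.sum_nonneg fun i _ => sq_nonneg _)

lemma sq_integral_sub_integral_le_card_mul {𝒳 ι : Type*} [MeasurableSpace 𝒳] [Fintype ι]
    {μ : Measure 𝒳} (p q v : 𝒳 → ι → ℝ) (hv : ∀ x i, |v x i| ≤ 1)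
    (hp : Integrable (fun x => ∑ i, p x i * v x i) μ)
    (hq : Integrable (fun x => ∑ i, q x i * v x i) μ)
    (hpq : Integrable (fun x => √(∑ i, (p x i - q x i) ^ 2)) μ) :
    (∫ x, ∑ i, p x i * v x i ∂μ - ∫ x, ∑ i, q x i * v x i ∂μ) ^ 2
      ≤ Fintype.card ι * (∫ x, √(∑ i, (p x i - q x i) ^ 2) ∂μ) ^ 2 := by
  have hpoint : ∀ x, |∑ i, p x i * v x i - ∑ i, q x i * v x i|
      ≤ √(Fintype.card ι) * √(∑ i, (p x i - q x i) ^ 2) := fun x => by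
    rw [← Finset.sum_sub_distrib]
    simp only [← sub_mul]
    exact abs_sum_mul_le_sqrt_card_mul_sqrt _ _ (hv x)
  have habs : |∫ x, ∑ i, p x i * v x i ∂μ - ∫ x, ∑ i, q x i * v x i ∂μ|
      ≤ √(Fintype.card ι) * ∫ x, √(∑ i, (p x i - q x i) ^ 2) ∂μ := by
    rw [← integral_sub hp hq, ← integral_const_mul]
    exact (abs_integral_le_integral_abs).trans
      (integral_mono (hp.sub hq).abs (hpq.const_mul _) hpoint)
  calc _ = |∫ x, ∑ i, p x i * v x i ∂μ - ∫ x, ∑ i, q x i * v x i ∂μ| ^ 2 := (sq_abs _).symm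
    _ ≤ (√(Fintype.card ι) * ∫ x, √(∑ i, (p x i - q x i) ^ 2) ∂μ) ^ 2 :=
        pow_le_pow_left₀ (abs_nonneg _) habs 2
    _ = _ := by rw [mul_pow, Real.sq_sqrt (Nat.cast_nonneg _)]

/-- Bias-variance tradeoff for distillation with a fixed teacher `pt` and bounded loss
(`‖ℓ(f(x))‖_∞ ≤ 1`): the mean squared deviation of the distilled empirical risk from
the population risk is at most
`(1/N)·Var[p^t(x)^T ℓ(f(x))] + L·(E‖p^t(x) − p*(x)‖₂)²`. -/
theorem stmt9 {𝒳 : Type*} [MeasurableSpace 𝒳] {L N : ℕ} (hN : 0 < N)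
    (μ : Measure 𝒳) [IsProbabilityMeasure μ]
    (pstar pt : 𝒳 → Fin L → ℝ)
    (ℓ : Fin L → (Fin L → ℝ) → ℝ) (f : 𝒳 → Fin L → ℝ)
    (hℓ : ∀ x y, |ℓ y (f x)| ≤ 1)
    (hmeas : Measurable fun x => ∑ y, pt x y * ℓ y (f x))
    (hmeas' : Measurable fun x => ∑ y, pstar x y * ℓ y (f x))
    (hmeas'' : Measurable fun x => Real.sqrt (∑ y, (pt x y - pstar x y) ^ 2))
    (hbdd : ∃ C, (∀ x, |∑ y, pt x y * ℓ y (f x)| ≤ C)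
              ∧ (∀ x, |∑ y, pstar x y * ℓ y (f x)| ≤ C)
              ∧ ∀ x, Real.sqrt (∑ y, (pt x y - pstar x y) ^ 2) ≤ C) :
    ∫ S : Fin N → 𝒳,
        ((N : ℝ)⁻¹ * (∑ n, ∑ y, pt (S n) y * ℓ y (f (S n)))
          - ∫ x, ∑ y, pstar x y * ℓ y (f x) ∂μ) ^ 2
        ∂(Measure.pi fun _ : Fin N => μ)
      ≤ (N : ℝ)⁻¹ * variance (fun x => ∑ y, pt x y * ℓ y (f x)) μ
        + (L : ℝ) * (∫ x, Real.sqrt (∑ y, (pt x y - pstar x y) ^ 2) ∂μ) ^ 2 := by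
  obtain ⟨C, hCt, hCstar, hCdiff⟩ := hbdd
  have hteacher : MemLp (fun x => ∑ y, pt x y * ℓ y (f x)) 2 μ :=
    MemLp.of_bound hmeas.aestronglyMeasurable C (.of_forall hCt)
  have hdiff : Integrable (fun x => Real.sqrt (∑ y, (pt x y - pstar x y) ^ 2)) μ :=
    .of_bound hmeas''.aestronglyMeasurable C (.of_forall fun x => by
      rw [Real.norm_eq_abs, abs_of_nonneg (Real.sqrt_nonneg _)]; exact hCdiff x)
  rw [integral_sampleMean_sub_const_sq hN hteacher]
  have hbias := sq_integral_sub_integral_le_card_mul pt pstar (fun x y => ℓ y (f x))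
    hℓ (hteacher.integrable one_le_two)
    (.of_bound hmeas'.aestronglyMeasurable C (.of_forall hCstar)) hdiff
  rw [Fintype.card_fin] at hbias
  gcongr
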